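/- Linearity implies occurrence in terms: if Γ ⊢ M : A is a well-typed pattern term and the n-th assumption in Γ is linear (flag L), then n occurs in M. -/

import Mathlib

namespace LinUnif

/-- Linearity flags on variables/terms. -/
inductive Flag | I | A | L
deriving DecidableEq

/-- Context linearity flags: intuitionistic, affine, used affine, linear, used linear. -/
inductive CFlag | i | a | ua | l | ul
deriving DecidableEq

/-- Types of the linear/affine λ-calculus. -/
inductive Ty
  | base (n : ℕ)
  | withT (A B : Ty)
  | lolli (A B : Ty)
  | affarr (A B : Ty)
  | arr (A B : Ty)
deriving DecidableEq

/-- Contexts: lists of types tagged with context linearity flags (head = de Bruijn index 1). -/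
abbrev Ctx := List (Ty × CFlag)

def flagC : Flag → CFlag | .I => .i | .A => .a | .L => .l
def cToF : CFlag → Flag | .i => .I | .a => .A | .ua => .A | .l => .L | .ul => .L

/-- No linear (L) assumptions occur. -/
def NoLin (Γ : Ctx) : Prop := ∀ e ∈ Γ, e.2 ≠ CFlag.l

/-- The intuitionistic part of a context: L ↦ UL, A ↦ UA. -/
def bar (Γ : Ctx) : Ctx :=
  Γ.map fun e => (e.1, match e.2 with | .l => CFlag.ul | .a => CFlag.ua | c => c)

/-- Context splitting Γ = Γ₁ ⋈ Γ₂. -/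
inductive Split : Ctx → Ctx → Ctx → Prop
  | nil : Split [] [] []
  | int {Γ Γ₁ Γ₂ A} : Split Γ Γ₁ Γ₂ → Split ((A,.i)::Γ) ((A,.i)::Γ₁) ((A,.i)::Γ₂)
  | ulin {Γ Γ₁ Γ₂ A} : Split Γ Γ₁ Γ₂ → Split ((A,.ul)::Γ) ((A,.ul)::Γ₁) ((A,.ul)::Γ₂)
  | uaff {Γ Γ₁ Γ₂ A} : Split Γ Γ₁ Γ₂ → Split ((A,.ua)::Γ) ((A,.ua)::Γ₁) ((A,.ua)::Γ₂)
  | linl {Γ Γ₁ Γ₂ A} : Split Γ Γ₁ Γ₂ → Split ((A,.l)::Γ) ((A,.l)::Γ₁) ((A,.ul)::Γ₂)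
  | linr {Γ Γ₁ Γ₂ A} : Split Γ Γ₁ Γ₂ → Split ((A,.l)::Γ) ((A,.ul)::Γ₁) ((A,.l)::Γ₂)
  | affl {Γ Γ₁ Γ₂ A} : Split Γ Γ₁ Γ₂ → Split ((A,.a)::Γ) ((A,.a)::Γ₁) ((A,.ua)::Γ₂)
  | affr {Γ Γ₁ Γ₂ A} : Split Γ Γ₁ Γ₂ → Split ((A,.a)::Γ) ((A,.ua)::Γ₁) ((A,.a)::Γ₂)

/-- Affine weakening Γ ≻_aff Γ'. -/
def AffWeak (Γ Γ' : Ctx) : Prop := ∃ Γ'', Split Γ Γ'' Γ' ∧ NoLin Γ''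

/-- Typing of variables (1-based de Bruijn indices): Γ ⊢ n^f ⇒ A. -/
inductive VarTy : Ctx → ℕ → Flag → Ty → Prop
  | here {Γ A f} : NoLin Γ → VarTy ((A, flagC f)::Γ) 1 f A
  | there {Γ B l n f A} : VarTy Γ n f A → l ≠ CFlag.l → VarTy ((B,l)::Γ) (n+1) f A

/-- Relaxed typing of variables Γ ⊢ᵢ n^f ⇒ A : all variables available,
    disregarding linearity/affineness (usedness). -/
inductive VarTyR : Ctx → ℕ → Flag → Ty → Prop
  | here {Γ A l f} : cToF l = f → VarTyR ((A,l)::Γ) 1 f A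
  | there {Γ B l n f A} : VarTyR Γ n f A → VarTyR ((B,l)::Γ) (n+1) f A

/-- Substitution entries: a de Bruijn index together with its variable flag f'
    and the extension flag f (the entry `n^{f'f}`). A full substitution is a
    list of entries followed by a shift `↑ⁿ`. -/
abbrev SubE := List (ℕ × Flag × Flag)

def shiftE (es : SubE) : SubE := es.map fun e => (e.1+1, e.2)

/-- Typing of substitutions (whose entries are variables): Γ ⊢ es.↑ⁿ : Γ'. -/
inductive SubTy : Ctx → SubE → ℕ → Ctx → Prop
  | nil : SubTy [] [] 0 []
  | shift {Γ B l n Γ'} : SubTy Γ [] n Γ' → l ≠ CFlag.l → SubTy ((B,l)::Γ) [] (n+1) Γ'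
  | consI {Γ m f' A es n Γ'} : VarTy (bar Γ) m f' A → SubTy Γ es n Γ' →
      SubTy Γ ((m,f',Flag.I)::es) n ((A,CFlag.i)::Γ')
  | consL {Γ Γ₁ Γ₂ m f' A es n Γ'} : Split Γ Γ₁ Γ₂ → VarTy Γ₁ m f' A → SubTy Γ₂ es n Γ' →
      SubTy Γ ((m,f',Flag.L)::es) n ((A,CFlag.l)::Γ')
  | consA {Γ Γ₁ Γ₂ m f' A es n Γ'} : Split Γ Γ₁ Γ₂ → NoLin Γ₁ → VarTy Γ₁ m f' A →
      SubTy Γ₂ es n Γ' → SubTy Γ ((m,f',Flag.A)::es) n ((A,CFlag.a)::Γ')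
  | consUL {Γ m f' A es n Γ'} : VarTyR Γ m f' A → SubTy Γ es n Γ' →
      SubTy Γ ((m,f',Flag.L)::es) n ((A,CFlag.ul)::Γ')
  | consUA {Γ m f' A es n Γ'} : VarTyR Γ m f' A → f' ≠ Flag.L → SubTy Γ es n Γ' →
      SubTy Γ ((m,f',Flag.A)::es) n ((A,CFlag.ua)::Γ')

/-- Pattern substitution: distinct de Bruijn indices, no linear-changing extension. -/
def PatternSub (es : SubE) : Prop :=
  es.Pairwise (fun a b => a.1 ≠ b.1) ∧ ∀ e ∈ es, e.2.1 = e.2.2 ∧ 1 ≤ e.1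

/-- Terms (canonical forms), with logic variables `lvar X es sh` under a
    substitution consisting of variable entries `es` and a trailing shift `sh`. -/
inductive Tm
  | var (n : ℕ) (f : Flag)
  | lvar (X : ℕ) (es : SubE) (sh : ℕ)
  | pair (M N : Tm)
  | fst (M : Tm)
  | snd (M : Tm)
  | lamL (M : Tm)
  | lamA (M : Tm)
  | lamI (M : Tm)
  | appL (M N : Tm)
  | appA (M N : Tm)
  | appI (M N : Tm)
deriving DecidableEq

/-- Bidirectional typing of canonical terms, with assignments ΓX, AX of contexts
    and types to logic variables. -/
inductive HasTy (ΓX : ℕ → Ctx) (AX : ℕ → Ty) : Ctx → Tm → Ty → Prop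
  | var {Γ n f A} : VarTy Γ n f A → HasTy ΓX AX Γ (.var n f) A
  | lvar {Γ es sh X} : SubTy Γ es sh (ΓX X) → HasTy ΓX AX Γ (.lvar X es sh) (AX X)
  | pair {Γ M N A B} : HasTy ΓX AX Γ M A → HasTy ΓX AX Γ N B →
      HasTy ΓX AX Γ (.pair M N) (.withT A B)
  | fst {Γ M A B} : HasTy ΓX AX Γ M (.withT A B) → HasTy ΓX AX Γ (.fst M) A
  | snd {Γ M A B} : HasTy ΓX AX Γ M (.withT A B) → HasTy ΓX AX Γ (.snd M) B
  | lamL {Γ M A B} : HasTy ΓX AX ((A,CFlag.l)::Γ) M B → HasTy ΓX AX Γ (.lamL M) (.lolli A B)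
  | lamA {Γ M A B} : HasTy ΓX AX ((A,CFlag.a)::Γ) M B → HasTy ΓX AX Γ (.lamA M) (.affarr A B)
  | lamI {Γ M A B} : HasTy ΓX AX ((A,CFlag.i)::Γ) M B → HasTy ΓX AX Γ (.lamI M) (.arr A B)
  | appL {Γ Γ₁ Γ₂ M N A B} : Split Γ Γ₁ Γ₂ → HasTy ΓX AX Γ₁ M (.lolli A B) →
      HasTy ΓX AX Γ₂ N A → HasTy ΓX AX Γ (.appL M N) B
  | appA {Γ Γ₁ Γ₂ M N A B} : Split Γ Γ₁ Γ₂ → NoLin Γ₂ → HasTy ΓX AX Γ₁ M (.affarr A B) →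
      HasTy ΓX AX Γ₂ N A → HasTy ΓX AX Γ (.appA M N) B
  | appI {Γ M N A B} : HasTy ΓX AX Γ M (.arr A B) → HasTy ΓX AX (bar Γ) N A →
      HasTy ΓX AX Γ (.appI M N) B

/-- All logic-variable substitutions occurring in a term are pattern substitutions. -/
def PatternTm : Tm → Prop
  | .var _ _ => True
  | .lvar _ es _ => PatternSub es
  | .pair M N => PatternTm M ∧ PatternTm N
  | .fst M => PatternTm M
  | .snd M => PatternTm M
  | .lamL M => PatternTm M
  | .lamA M => PatternTm M
  | .lamI M => PatternTm M
  | .appL M N => PatternTm M ∧ PatternTm N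
  | .appA M N => PatternTm M ∧ PatternTm N
  | .appI M N => PatternTm M ∧ PatternTm N

/-- Occurrence n ∈ M of a variable in a term (flexible occurrences included). -/
inductive Occurs : ℕ → Tm → Prop
  | var {n f} : Occurs n (.var n f)
  | lvar {n X es sh e} : e ∈ es → e.1 = n → Occurs n (.lvar X es sh)
  | pairl {n M N} : Occurs n M → Occurs n (.pair M N)
  | pairr {n M N} : Occurs n N → Occurs n (.pair M N)
  | fst {n M} : Occurs n M → Occurs n (.fst M)
  | snd {n M} : Occurs n M → Occurs n (.snd M)
  | lamL {n M} : Occurs (n+1) M → Occurs n (.lamL M)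
  | lamA {n M} : Occurs (n+1) M → Occurs n (.lamA M)
  | lamI {n M} : Occurs (n+1) M → Occurs n (.lamI M)
  | appLl {n M N} : Occurs n M → Occurs n (.appL M N)
  | appLr {n M N} : Occurs n N → Occurs n (.appL M N)
  | appAl {n M N} : Occurs n M → Occurs n (.appA M N)
  | appAr {n M N} : Occurs n N → Occurs n (.appA M N)
  | appIl {n M N} : Occurs n M → Occurs n (.appI M N)
  | appIr {n M N} : Occurs n N → Occurs n (.appI M N)

/-- Rigid occurrence n ∈_rig M: occurrence not inside a logic variable. -/
inductive RigidOccurs : ℕ → Tm → Prop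
  | var {n f} : RigidOccurs n (.var n f)
  | pairl {n M N} : RigidOccurs n M → RigidOccurs n (.pair M N)
  | pairr {n M N} : RigidOccurs n N → RigidOccurs n (.pair M N)
  | fst {n M} : RigidOccurs n M → RigidOccurs n (.fst M)
  | snd {n M} : RigidOccurs n M → RigidOccurs n (.snd M)
  | lamL {n M} : RigidOccurs (n+1) M → RigidOccurs n (.lamL M)
  | lamA {n M} : RigidOccurs (n+1) M → RigidOccurs n (.lamA M)
  | lamI {n M} : RigidOccurs (n+1) M → RigidOccurs n (.lamI M)
  | appLl {n M N} : RigidOccurs n M → RigidOccurs n (.appL M N)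
  | appLr {n M N} : RigidOccurs n N → RigidOccurs n (.appL M N)
  | appAl {n M N} : RigidOccurs n M → RigidOccurs n (.appA M N)
  | appAr {n M N} : RigidOccurs n N → RigidOccurs n (.appA M N)
  | appIl {n M N} : RigidOccurs n M → RigidOccurs n (.appI M N)
  | appIr {n M N} : RigidOccurs n N → RigidOccurs n (.appI M N)

/-- Occurrence of a logic variable X in a term. -/
inductive HasLvar : ℕ → Tm → Prop
  | lvar {X es sh} : HasLvar X (.lvar X es sh)
  | pairl {X M N} : HasLvar X M → HasLvar X (.pair M N)
  | pairr {X M N} : HasLvar X N → HasLvar X (.pair M N)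
  | fst {X M} : HasLvar X M → HasLvar X (.fst M)
  | snd {X M} : HasLvar X M → HasLvar X (.snd M)
  | lamL {X M} : HasLvar X M → HasLvar X (.lamL M)
  | lamA {X M} : HasLvar X M → HasLvar X (.lamA M)
  | lamI {X M} : HasLvar X M → HasLvar X (.lamI M)
  | appLl {X M N} : HasLvar X M → HasLvar X (.appL M N)
  | appLr {X M N} : HasLvar X N → HasLvar X (.appL M N)
  | appAl {X M N} : HasLvar X M → HasLvar X (.appA M N)
  | appAr {X M N} : HasLvar X N → HasLvar X (.appA M N)
  | appIl {X M N} : HasLvar X M → HasLvar X (.appI M N)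
  | appIr {X M N} : HasLvar X N → HasLvar X (.appI M N)

/-- Look up a (1-based) variable index in a substitution es.↑^sh,
    returning the new index and variable flag. -/
def lookupE (es : SubE) (sh : ℕ) (n : ℕ) (f : Flag) : ℕ × Flag :=
  match es[n-1]? with
  | some e => (e.1, e.2.1)
  | none => (n - es.length + sh, f)

/-- Extend a substitution under a binder: 1^{ff}.(s ∘ ↑). -/
def extSub (es : SubE) (f : Flag) : SubE := (1, f, f) :: shiftE es

/-- Apply a substitution (of the variable-entry form) to a term. -/
def applySub (es : SubE) (sh : ℕ) : Tm → Tm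
  | .var n f => .var (lookupE es sh n f).1 (lookupE es sh n f).2
  | .lvar X ts _ =>
      .lvar X (ts.map fun e => ((lookupE es sh e.1 e.2.1).1, (lookupE es sh e.1 e.2.1).2, e.2.2)) sh
  | .pair M N => .pair (applySub es sh M) (applySub es sh N)
  | .fst M => .fst (applySub es sh M)
  | .snd M => .snd (applySub es sh M)
  | .lamL M => .lamL (applySub (extSub es .L) (sh+1) M)
  | .lamA M => .lamA (applySub (extSub es .A) (sh+1) M)
  | .lamI M => .lamI (applySub (extSub es .I) (sh+1) M)
  | .appL M N => .appL (applySub es sh M) (applySub es sh N)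
  | .appA M N => .appA (applySub es sh M) (applySub es sh N)
  | .appI M N => .appI (applySub es sh M) (applySub es sh N)

/-- Instantiation [X ← N]M of a logic variable. -/
def inst (X : ℕ) (N : Tm) : Tm → Tm
  | .var n f => .var n f
  | .lvar Y es sh => if Y = X then applySub es sh N else .lvar Y es sh
  | .pair M M' => .pair (inst X N M) (inst X N M')
  | .fst M => .fst (inst X N M)
  | .snd M => .snd (inst X N M)
  | .lamL M => .lamL (inst X N M)
  | .lamA M => .lamA (inst X N M)
  | .lamI M => .lamI (inst X N M)
  | .appL M M' => .appL (inst X N M) (inst X N M')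
  | .appA M M' => .appA (inst X N M) (inst X N M')
  | .appI M M' => .appI (inst X N M) (inst X N M')


/-!
Induction on the typing derivation. A linear assumption can never be discarded: the variable
and shift rules require every other assumption to be non-linear, a context split hands a linear
assumption to exactly one side, the argument of an affine application is typed in a context
without linear assumptions, and that of an intuitionistic application in `bar Γ`, where the
assumption is marked used. So the assumption reaches a variable rule, which forces the variable
to be it, or a logic variable, whose typed substitution must then contain it as an entry.
-/

/-- Positions are 0-based, de Bruijn indices 1-based: `LinAt Γ i` concerns the variable `i + 1`. -/
def LinAt (Γ : Ctx) (i : ℕ) : Prop := ∃ B, Γ[i]? = some (B, CFlag.l)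

@[simp]
theorem linAt_cons_zero (e : Ty × CFlag) (Γ : Ctx) : LinAt (e :: Γ) 0 ↔ e.2 = CFlag.l := by
  obtain ⟨B, c⟩ := e
  simp [LinAt]

@[simp]
theorem linAt_cons_succ (e : Ty × CFlag) (Γ : Ctx) (i : ℕ) :
    LinAt (e :: Γ) (i + 1) ↔ LinAt Γ i := by
  simp [LinAt]

@[simp]
theorem not_linAt_nil (i : ℕ) : ¬LinAt [] i := by
  simp [LinAt]

theorem NoLin.not_linAt {Γ : Ctx} (h : NoLin Γ) (i : ℕ) : ¬LinAt Γ i := by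
  rintro ⟨B, hB⟩
  exact h _ (List.mem_of_getElem? hB) rfl

theorem Split.linAt {Γ Γ₁ Γ₂ : Ctx} (h : Split Γ Γ₁ Γ₂) {i : ℕ} (hi : LinAt Γ i) :
    LinAt Γ₁ i ∨ LinAt Γ₂ i := by
  induction h generalizing i with
  | nil => simp at hi
  | int _ ih | ulin _ ih | uaff _ ih | linl _ ih | linr _ ih | affl _ ih | affr _ ih =>
    cases i with
    | zero => simp_all
    | succ i => simpa using ih (by simpa using hi)

theorem VarTy.eq_succ_of_linAt {Γ : Ctx} {n : ℕ} {f : Flag} {A : Ty} (h : VarTy Γ n f A)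
    {i : ℕ} (hi : LinAt Γ i) : n = i + 1 := by
  induction h generalizing i with
  | here hΓ =>
    cases i with
    | zero => rfl
    | succ i => exact absurd (by simpa using hi) (hΓ.not_linAt i)
  | there _ hl ih =>
    cases i with
    | zero => exact absurd (by simpa using hi) hl
    | succ i => simpa using ih (by simpa using hi)

theorem SubTy.exists_mem_of_linAt {Γ : Ctx} {es : SubE} {sh : ℕ} {Γ' : Ctx}
    (h : SubTy Γ es sh Γ') {i : ℕ} (hi : LinAt Γ i) : ∃ e ∈ es, e.1 = i + 1 := by
  induction h generalizing i with
  | nil => simp at hi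
  | shift _ hl ih =>
    cases i with
    | zero => exact absurd (by simpa using hi) hl
    | succ i => simpa using ih (by simpa using hi)
  | consI _ _ ih | consUL _ _ ih | consUA _ _ _ ih => exact List.exists_mem_cons_of_exists (ih hi)
  | consL hs hv _ ih =>
    rcases hs.linAt hi with h₁ | h₂
    · exact List.exists_mem_cons_of _ (hv.eq_succ_of_linAt h₁)
    · exact List.exists_mem_cons_of_exists (ih h₂)
  | consA hs hΓ₁ _ _ ih =>
    rcases hs.linAt hi with h₁ | h₂
    · exact absurd h₁ (hΓ₁.not_linAt i)
    · exact List.exists_mem_cons_of_exists (ih h₂)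

theorem HasTy.occurs_of_linAt {ΓX : ℕ → Ctx} {AX : ℕ → Ty} {Γ : Ctx} {M : Tm} {A : Ty}
    (h : HasTy ΓX AX Γ M A) {i : ℕ} (hi : LinAt Γ i) : Occurs (i + 1) M := by
  induction h generalizing i with
  | var hv => exact hv.eq_succ_of_linAt hi ▸ .var
  | lvar hs =>
    obtain ⟨e, he, he₁⟩ := hs.exists_mem_of_linAt hi
    exact .lvar he he₁
  | pair _ _ ih _ => exact .pairl (ih hi)
  | fst _ ih => exact .fst (ih hi)
  | snd _ ih => exact .snd (ih hi)
  | lamL _ ih => exact .lamL (ih (by simpa using hi))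
  | lamA _ ih => exact .lamA (ih (by simpa using hi))
  | lamI _ ih => exact .lamI (ih (by simpa using hi))
  | appL hs _ _ ih₁ ih₂ => exact (hs.linAt hi).elim (.appLl ∘ ih₁) (.appLr ∘ ih₂)
  | appA hs hΓ₂ _ _ ih _ => exact (hs.linAt hi).elim (.appAl ∘ ih) (absurd · (hΓ₂.not_linAt i))
  | appI _ _ ih _ => exact .appIl (ih hi)

theorem linear_occurs_in_term_general (ΓX : ℕ → Ctx) (AX : ℕ → Ty)
    (Γ : Ctx) (M : Tm) (A : Ty)
    (hty : HasTy ΓX AX Γ M A)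
    (i : ℕ) (hi : i < Γ.length) (hl : (Γ.get ⟨i, hi⟩).2 = CFlag.l) :
    Occurs (i + 1) M :=
  hty.occurs_of_linAt ⟨Γ[i].1, by simp [← hl]⟩

/-- Linearity implies occurrence in terms: if Γ ⊢ M : A is a
    well-typed pattern term and the n-th assumption of Γ is linear, then n
    occurs in M. -/
theorem linear_occurs_in_term (ΓX : ℕ → Ctx) (AX : ℕ → Ty)
    (Γ : Ctx) (M : Tm) (A : Ty)
    (hty : HasTy ΓX AX Γ M A) (hpat : PatternTm M)
    (i : ℕ) (hi : i < Γ.length) (hl : (Γ.get ⟨i, hi⟩).2 = CFlag.l) :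
    Occurs (i + 1) M :=
  linear_occurs_in_term_general ΓX AX Γ M A hty i hi hl

end LinUnif
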